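/- If λ₁, ..., λₙ are real numbers with ∑λᵢ = 0 and ∑λᵢ² = 1 (n ≥ 2), then ∑λᵢ³ ≤ (n−2)/√(n(n−1)), with equality when n−1 of the λᵢ are equal to −1/√(n(n−1)) and one equals (n−1)/√(n(n−1)). -/

import Mathlib

/-!
Cauchy–Schwarz applied to the other `n - 1` entries bounds every entry from above by
`M = (n - 1)/√(n(n - 1))`. With `m = -1/√(n(n - 1))`, the cubic `(x - m)²(x - M)` is then
nonpositive at every entry, which bounds `x³` by a quadratic in `x`; summing it and using
`∑ λᵢ = 0`, `∑ λᵢ² = 1` gives exactly the claimed constant, attained at the extremal configuration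
where the bound is tight at every entry.
-/

open Finset

variable {ι : Type*} [Fintype ι]

lemma card_mul_sq_le_of_sum_eq_zero [DecidableEq ι] {l : ι → ℝ} (h : ∑ i, l i = 0) (j : ι) :
    Fintype.card ι * l j ^ 2 ≤ (Fintype.card ι - 1) * ∑ i, l i ^ 2 := by
  have hrest : ∑ i ∈ univ.erase j, l i = -l j := by
    linarith [add_sum_erase univ l (mem_univ j)]
  have hrest_sq : ∑ i ∈ univ.erase j, l i ^ 2 = ∑ i, l i ^ 2 - l j ^ 2 := by
    linarith [add_sum_erase univ (fun i => l i ^ 2) (mem_univ j)]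
  have hcs := sq_sum_le_card_mul_sum_sq (s := univ.erase j) (f := l)
  rw [hrest, hrest_sq, card_erase_of_mem (mem_univ j), card_univ,
    Nat.cast_sub (Fintype.card_pos_iff.2 ⟨j⟩)] at hcs
  linear_combination hcs

lemma pow_three_le_of_le {x M : ℝ} (m : ℝ) (hx : x ≤ M) :
    x ^ 3 ≤ (2 * m + M) * x ^ 2 - (m ^ 2 + 2 * m * M) * x + m ^ 2 * M := by
  linear_combination mul_nonneg (sq_nonneg (x - m)) (sub_nonneg.2 hx)

lemma sum_pow_three_le_of_le {l : ι → ℝ} {M : ℝ} (m : ℝ) (h₀ : ∑ i, l i = 0)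
    (h₁ : ∑ i, l i ^ 2 = 1) (hM : ∀ i, l i ≤ M) :
    ∑ i, l i ^ 3 ≤ 2 * m + M + Fintype.card ι * (m ^ 2 * M) :=
  calc ∑ i, l i ^ 3
      ≤ ∑ i, ((2 * m + M) * l i ^ 2 - (m ^ 2 + 2 * m * M) * l i + m ^ 2 * M) :=
        sum_le_sum fun i _ => pow_three_le_of_le m (hM i)
    _ = (2 * m + M) * ∑ i, l i ^ 2 - (m ^ 2 + 2 * m * M) * ∑ i, l i
          + Fintype.card ι * (m ^ 2 * M) := by
        rw [sum_add_distrib, sum_sub_distrib, ← mul_sum, ← mul_sum, sum_const, card_univ,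
          nsmul_eq_mul]
    _ = 2 * m + M + Fintype.card ι * (m ^ 2 * M) := by rw [h₀, h₁]; ring

lemma sum_eq_add_card_sub_one_mul [DecidableEq ι] {f : ι → ℝ} {a : ℝ} (j : ι)
    (h : ∀ i ≠ j, f i = a) : ∑ i, f i = f j + (Fintype.card ι - 1) * a := by
  rw [Fintype.sum_eq_add_sum_compl j, sum_congr rfl fun i hi => h i (by simpa using hi),
    sum_const, card_compl, card_singleton, nsmul_eq_mul,
    Nat.cast_sub (Fintype.card_pos_iff.2 ⟨j⟩), Nat.cast_one]

/-- If `λ₁, …, λₙ` are reals with `∑ λᵢ = 0` and `∑ λᵢ² = 1` (`n ≥ 2`), then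
`∑ λᵢ³ ≤ (n−2)/√(n(n−1))`, with equality when `n−1` of the `λᵢ` equal
`−1/√(n(n−1))` and one equals `(n−1)/√(n(n−1))`. -/
theorem sum_cubes_le (n : ℕ) (hn : 2 ≤ n) :
    (∀ l : Fin n → ℝ, ∑ i, l i = 0 → ∑ i, (l i) ^ 2 = 1 →
      ∑ i, (l i) ^ 3 ≤ ((n : ℝ) - 2) / Real.sqrt (n * (n - 1))) ∧
    (∀ l : Fin n → ℝ,
      (∃ j, (∀ i ≠ j, l i = -1 / Real.sqrt (n * (n - 1))) ∧
        l j = ((n : ℝ) - 1) / Real.sqrt (n * (n - 1))) →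
      ∑ i, (l i) ^ 3 = ((n : ℝ) - 2) / Real.sqrt (n * (n - 1))) := by
  have hn' : (2 : ℝ) ≤ n := by exact_mod_cast hn
  have hpos : (0 : ℝ) < n * (n - 1) := by nlinarith
  set s := Real.sqrt (n * (n - 1))
  have hs : 0 < s := Real.sqrt_pos.2 hpos
  have hs2 : s ^ 2 = n * (n - 1) := Real.sq_sqrt hpos.le
  have hM : 0 ≤ ((n : ℝ) - 1) / s := div_nonneg (by linarith) hs.le
  have hM2 : n * (((n : ℝ) - 1) / s) ^ 2 = n - 1 := by rw [div_pow, hs2]; field_simp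
  refine ⟨fun l h₀ h₁ => ?_, fun l ⟨j, hrest, hj⟩ => ?_⟩
  · have hle (j : Fin n) : l j ≤ (n - 1) / s := by
      have hsq := card_mul_sq_le_of_sum_eq_zero h₀ j
      rw [Fintype.card_fin, h₁] at hsq
      exact (le_abs_self _).trans (abs_le_of_sq_le_sq (by nlinarith) hM)
    calc ∑ i, l i ^ 3 ≤ 2 * (-1 / s) + (n - 1) / s + n * ((-1 / s) ^ 2 * ((n - 1) / s)) := by
          simpa only [Fintype.card_fin] using sum_pow_three_le_of_le (-1 / s) h₀ h₁ hle
      _ = (n - 2) / s := by field_simp; linear_combination -hs2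
  · rw [sum_eq_add_card_sub_one_mul j fun i hi => by rw [hrest i hi], hj, Fintype.card_fin]
    field_simp
    linear_combination (2 - (n : ℝ)) * hs2
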